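/- Let k ≥ 1. Suppose W = W₁ ⊕ W₂ is a direct sum decomposition of W into two subspaces such that R̄(x₁,x₂,x₃,x₄) = 0 whenever each argument x_m lies in W₁ ∪ W₂ and not all four arguments lie in the same summand W_p. Then W₁ = {0} or W₂ = {0}. In other words, the weak 0-model (W, R̄) is indecomposable. -/
import Mathlib


open Finset

/-- Index type for the distinguished basis of `W = ℝ^{2k+1}`:
`Sum.inl i ↔ Ū_i` (0 ≤ i ≤ k), `Sum.inr i ↔ S̄_{i+1}` (1 ≤ i+1 ≤ k). -/
abbrev IdxW (k : ℕ) := Fin (k+1) ⊕ Fin k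

abbrev ModelW (k : ℕ) := IdxW k → ℝ

/-- `Ā_i(x,y) = x_{Ū_0} y_{Ū_i} - x_{Ū_i} y_{Ū_0}`. -/
def AfW (k : ℕ) (i : Fin k) (x y : ModelW k) : ℝ :=
  x (Sum.inl 0) * y (Sum.inl i.succ) - x (Sum.inl i.succ) * y (Sum.inl 0)

/-- `B̄_i(x,y) = x_{Ū_i} y_{S̄_i} - x_{S̄_i} y_{Ū_i}`. -/
def BfW (k : ℕ) (i : Fin k) (x y : ModelW k) : ℝ :=
  x (Sum.inl i.succ) * y (Sum.inr i) - x (Sum.inr i) * y (Sum.inl i.succ)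

/-- The curvature tensor `R̄` of the weak 0-model `(W, R̄)`. -/
def RtW (k : ℕ) (x y z w : ModelW k) : ℝ :=
  ∑ i : Fin k, (AfW k i x y * BfW k i z w + BfW k i x y * AfW k i z w)

/-- The distinguished basis vectors. -/
def eW (k : ℕ) (j : IdxW k) : ModelW k := fun j' => if j' = j then 1 else 0

lemma RtW_addz (k : ℕ) (x y z z' w : ModelW k) :
    RtW k x y (z + z') w = RtW k x y z w + RtW k x y z' w := by
  unfold RtW AfW BfW
  rw [← Finset.sum_add_distrib]
  exact Finset.sum_congr rfl fun i _ => by simp only [Pi.add_apply]; ring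

lemma RtW_addw (k : ℕ) (x y z w w' : ModelW k) :
    RtW k x y z (w + w') = RtW k x y z w + RtW k x y z w' := by
  unfold RtW AfW BfW
  rw [← Finset.sum_add_distrib]
  exact Finset.sum_congr rfl fun i _ => by simp only [Pi.add_apply]; ring

lemma RtW_zero_left (k : ℕ) (y z w : ModelW k) : RtW k 0 y z w = 0 := by
  unfold RtW AfW BfW; simp

lemma RtW_zero_snd (k : ℕ) (x z w : ModelW k) : RtW k x 0 z w = 0 := by
  unfold RtW AfW BfW; simp

lemma RtW_eq_A (k : ℕ) (i : Fin k) (x y : ModelW k) :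
    RtW k x y (eW k (Sum.inl i.succ)) (eW k (Sum.inr i)) = AfW k i x y := by
  unfold RtW
  rw [Finset.sum_eq_single i]
  · unfold AfW BfW eW
    have h1 : (Sum.inl 0 : IdxW k) ≠ Sum.inl i.succ := by
      simp [(Fin.succ_ne_zero i).symm]
    simp [h1]
  · intro j _ hj
    unfold AfW BfW eW
    have h1 : (Sum.inl j.succ : IdxW k) ≠ Sum.inl i.succ := by
      simp [Fin.succ_inj]; exact hj
    have h2 : (Sum.inr j : IdxW k) ≠ Sum.inr i := by simp [hj]
    simp [h1, h2]
  · simp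

lemma RtW_eq_B (k : ℕ) (i : Fin k) (x y : ModelW k) :
    RtW k x y (eW k (Sum.inl 0)) (eW k (Sum.inl i.succ)) = BfW k i x y := by
  unfold RtW
  rw [Finset.sum_eq_single i]
  · unfold AfW BfW eW
    have h1 : (Sum.inl i.succ : IdxW k) ≠ Sum.inl 0 := by
      simp [Fin.succ_ne_zero i]
    simp [h1]
  · intro j _ hj
    unfold AfW BfW eW
    have h1 : (Sum.inl j.succ : IdxW k) ≠ Sum.inl i.succ := by
      simp [Fin.succ_inj]; exact hj
    have h2 : (Sum.inl j.succ : IdxW k) ≠ Sum.inl 0 := by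
      simp [Fin.succ_ne_zero j]
    simp [h1, h2]
  · simp

/-- The curvature vanishes whenever the first argument is in `W₁` and the
second in `W₂`, for arbitrary third and fourth arguments. -/
lemma mixed_vanish (k : ℕ) (W₁ W₂ : Submodule ℝ (ModelW k))
    (hsup : W₁ ⊔ W₂ = ⊤) (hinf : W₁ ⊓ W₂ = ⊥)
    (hvan : ∀ x y z w : ModelW k,
      x ∈ (W₁ : Set (ModelW k)) ∪ (W₂ : Set (ModelW k)) →
      y ∈ (W₁ : Set (ModelW k)) ∪ (W₂ : Set (ModelW k)) →
      z ∈ (W₁ : Set (ModelW k)) ∪ (W₂ : Set (ModelW k)) →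
      w ∈ (W₁ : Set (ModelW k)) ∪ (W₂ : Set (ModelW k)) →
      ¬ ((x ∈ W₁ ∧ y ∈ W₁ ∧ z ∈ W₁ ∧ w ∈ W₁) ∨ (x ∈ W₂ ∧ y ∈ W₂ ∧ z ∈ W₂ ∧ w ∈ W₂)) →
      RtW k x y z w = 0)
    (p q : ModelW k) (hp : p ∈ W₁) (hq : q ∈ W₂) (z w : ModelW k) :
    RtW k p q z w = 0 := by
  by_cases hp2 : p ∈ W₂
  · have : p = 0 := by
      have : p ∈ W₁ ⊓ W₂ := ⟨hp, hp2⟩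
      rwa [hinf, Submodule.mem_bot] at this
    rw [this, RtW_zero_left]
  by_cases hq1 : q ∈ W₁
  · have : q = 0 := by
      have : q ∈ W₁ ⊓ W₂ := ⟨hq1, hq⟩
      rwa [hinf, Submodule.mem_bot] at this
    rw [this, RtW_zero_snd]
  have hz : z ∈ W₁ ⊔ W₂ := by rw [hsup]; trivial
  have hw : w ∈ W₁ ⊔ W₂ := by rw [hsup]; trivial
  obtain ⟨z₁, hz₁, z₂, hz₂, rfl⟩ := Submodule.mem_sup.mp hz
  obtain ⟨w₁, hw₁, w₂, hw₂, rfl⟩ := Submodule.mem_sup.mp hw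
  have key : ∀ z' w' : ModelW k, z' ∈ (W₁ : Set (ModelW k)) ∪ W₂ →
      w' ∈ (W₁ : Set (ModelW k)) ∪ W₂ → RtW k p q z' w' = 0 := by
    intro z' w' hz' hw'
    refine hvan p q z' w' (Or.inl hp) (Or.inr hq) hz' hw' ?_
    rintro (⟨_, h, _⟩ | ⟨h, _⟩)
    · exact hq1 h
    · exact hp2 h
  rw [RtW_addz, RtW_addw, RtW_addw,
    key _ _ (Or.inl hz₁) (Or.inl hw₁), key _ _ (Or.inl hz₁) (Or.inr hw₂),
    key _ _ (Or.inr hz₂) (Or.inl hw₁), key _ _ (Or.inr hz₂) (Or.inr hw₂)]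
  ring

/-- Core algebraic argument: if `Ā` and `B̄` vanish on `W₁ × W₂`, the
subspaces span, and some `a ∈ W₁` has nonzero `Ū_0`-coordinate, then `W₂ = ⊥`. -/
lemma core_half (k : ℕ) (W₁ W₂ : Submodule ℝ (ModelW k)) (hk : 1 ≤ k)
    (hsup : W₁ ⊔ W₂ = ⊤)
    (hA : ∀ (i : Fin k) (p q : ModelW k), p ∈ W₁ → q ∈ W₂ → AfW k i p q = 0)
    (hB : ∀ (i : Fin k) (p q : ModelW k), p ∈ W₁ → q ∈ W₂ → BfW k i p q = 0)
    (a : ModelW k) (ha : a ∈ W₁) (ha0 : a (Sum.inl 0) ≠ 0) : W₂ = ⊥ := by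
  have stepA : ∀ q ∈ W₂, q (Sum.inl 0) = 0 := by
    intro q hq
    set i : Fin k := ⟨0, hk⟩ with hi
    have hmem : eW k (Sum.inl i.succ) ∈ W₁ ⊔ W₂ := by rw [hsup]; trivial
    obtain ⟨p, hp, q', hq', hpq⟩ := Submodule.mem_sup.mp hmem
    have hu : p (Sum.inl i.succ) + q' (Sum.inl i.succ) = 1 := by
      have := congrFun hpq (Sum.inl i.succ)
      simpa [eW] using this
    have h0 : p (Sum.inl 0) + q' (Sum.inl 0) = 0 := by
      have := congrFun hpq (Sum.inl 0)
      have hne : (Sum.inl 0 : IdxW k) ≠ Sum.inl i.succ := by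
        simp [(Fin.succ_ne_zero i).symm]
      simpa [eW, hne] using this
    have e1 := hA i a q ha hq
    have e2 := hA i p q hp hq
    have e3 := hA i a q' ha hq'
    unfold AfW at e1 e2 e3
    have : a (Sum.inl 0) * q (Sum.inl 0) = 0 := by
      linear_combination (-(a (Sum.inl 0) * q (Sum.inl 0))) * hu +
        (a (Sum.inl i.succ) * q (Sum.inl 0)) * h0 +
        p (Sum.inl 0) * e1 - a (Sum.inl 0) * e2 + q (Sum.inl 0) * e3
    exact (mul_eq_zero.mp this).resolve_left ha0
  have stepB : ∀ q ∈ W₂, ∀ i : Fin k, q (Sum.inl i.succ) = 0 := by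
    intro q hq i
    have e1 := hA i a q ha hq
    unfold AfW at e1
    rw [stepA q hq] at e1
    have : a (Sum.inl 0) * q (Sum.inl i.succ) = 0 := by linarith
    exact (mul_eq_zero.mp this).resolve_left ha0
  have stepC : ∀ q ∈ W₂, ∀ i : Fin k, q (Sum.inr i) = 0 := by
    intro q hq i
    have hmem : eW k (Sum.inl i.succ) ∈ W₁ ⊔ W₂ := by rw [hsup]; trivial
    obtain ⟨p, hp, q', hq', hpq⟩ := Submodule.mem_sup.mp hmem
    have hu : p (Sum.inl i.succ) + q' (Sum.inl i.succ) = 1 := by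
      have := congrFun hpq (Sum.inl i.succ)
      simpa [eW] using this
    have hpu : p (Sum.inl i.succ) = 1 := by
      rw [stepB q' hq' i] at hu; linarith
    have e := hB i p q hp hq
    unfold BfW at e
    rw [hpu, stepB q hq i] at e
    linarith
  rw [Submodule.eq_bot_iff]
  intro q hq
  funext j
  match j with
  | Sum.inl m =>
    induction m using Fin.cases with
    | zero => exact stepA q hq
    | succ i => exact stepB q hq i
  | Sum.inr i => exact stepC q hq i

theorem weak_model_indecomposable (k : ℕ) (hk : 1 ≤ k)
    (W₁ W₂ : Submodule ℝ (ModelW k))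
    (hsup : W₁ ⊔ W₂ = ⊤) (hinf : W₁ ⊓ W₂ = ⊥)
    (hvan : ∀ x y z w : ModelW k,
      x ∈ (W₁ : Set (ModelW k)) ∪ (W₂ : Set (ModelW k)) →
      y ∈ (W₁ : Set (ModelW k)) ∪ (W₂ : Set (ModelW k)) →
      z ∈ (W₁ : Set (ModelW k)) ∪ (W₂ : Set (ModelW k)) →
      w ∈ (W₁ : Set (ModelW k)) ∪ (W₂ : Set (ModelW k)) →
      ¬ ((x ∈ W₁ ∧ y ∈ W₁ ∧ z ∈ W₁ ∧ w ∈ W₁) ∨ (x ∈ W₂ ∧ y ∈ W₂ ∧ z ∈ W₂ ∧ w ∈ W₂)) →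
      RtW k x y z w = 0) :
    W₁ = ⊥ ∨ W₂ = ⊥ := by
  have hA : ∀ (i : Fin k) (p q : ModelW k), p ∈ W₁ → q ∈ W₂ → AfW k i p q = 0 := by
    intro i p q hp hq
    rw [← RtW_eq_A]
    exact mixed_vanish k W₁ W₂ hsup hinf hvan p q hp hq _ _
  have hB : ∀ (i : Fin k) (p q : ModelW k), p ∈ W₁ → q ∈ W₂ → BfW k i p q = 0 := by
    intro i p q hp hq
    rw [← RtW_eq_B]
    exact mixed_vanish k W₁ W₂ hsup hinf hvan p q hp hq _ _
  have hA' : ∀ (i : Fin k) (p q : ModelW k), p ∈ W₂ → q ∈ W₁ → AfW k i p q = 0 := by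
    intro i p q hp hq
    have := hA i q p hq hp
    unfold AfW at this ⊢
    linarith
  have hB' : ∀ (i : Fin k) (p q : ModelW k), p ∈ W₂ → q ∈ W₁ → BfW k i p q = 0 := by
    intro i p q hp hq
    have := hB i q p hq hp
    unfold BfW at this ⊢
    linarith
  have hmem : eW k (Sum.inl 0) ∈ W₁ ⊔ W₂ := by rw [hsup]; trivial
  obtain ⟨a, ha, b, hb, hab⟩ := Submodule.mem_sup.mp hmem
  have hsum : a (Sum.inl 0) + b (Sum.inl 0) = 1 := by
    have := congrFun hab (Sum.inl 0)
    simpa [eW] using this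
  by_cases ha0 : a (Sum.inl 0) = 0
  · left
    have hb0 : b (Sum.inl 0) ≠ 0 := by rw [ha0] at hsum; simp at hsum; simp [hsum]
    exact core_half k W₂ W₁ hk (by rw [sup_comm]; exact hsup) hA' hB' b hb hb0
  · right
    exact core_half k W₁ W₂ hk hsup hA hB a ha ha0
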